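/- Define φ: ℂ⁴ → ℂ⁴ by φ(u₀, u₁, v₀, v₁) = (−u₀ − (2/3)u₁, u₁, −v₀ − (4/27)v₁, v₁). Then: (a) φ ∘ φ = id; and (b) φ preserves the vanishing of F(u₀, u₁, v₀, v₁) = u₁³·v₀ + u₀²·(u₀ + u₁)·v₁, i.e. F(u₀,u₁,v₀,v₁) = 0 implies F(φ(u₀,u₁,v₀,v₁)) = 0. -/
import Mathlib


/-- `φ(u₀,u₁,v₀,v₁) = (−u₀ − (2/3)u₁, u₁, −v₀ − (4/27)v₁, v₁)`. -/
noncomputable def phiInvol (p : ℂ × ℂ × ℂ × ℂ) : ℂ × ℂ × ℂ × ℂ :=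
  (-p.1 - (2 / 3) * p.2.1, p.2.1, -p.2.2.1 - (4 / 27) * p.2.2.2, p.2.2.2)

/-- `F(u₀,u₁,v₀,v₁) = u₁³v₀ + u₀²(u₀+u₁)v₁`. -/
def Fcurve (p : ℂ × ℂ × ℂ × ℂ) : ℂ :=
  p.2.1 ^ 3 * p.2.2.1 + p.1 ^ 2 * (p.1 + p.2.1) * p.2.2.2

/-- `φ` is an involution preserving the vanishing of `F`. -/
theorem phi_involution_preserves_curve :
    (∀ p : ℂ × ℂ × ℂ × ℂ, phiInvol (phiInvol p) = p) ∧
    (∀ p : ℂ × ℂ × ℂ × ℂ, Fcurve p = 0 → Fcurve (phiInvol p) = 0) := by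
  constructor
  · rintro ⟨a, b, c, d⟩
    simp only [phiInvol]
    refine Prod.ext ?_ (Prod.ext rfl (Prod.ext ?_ rfl)) <;> ring
  · rintro ⟨a, b, c, d⟩ h
    simp only [Fcurve, phiInvol] at h ⊢
    linear_combination -h
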